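/- There exist a constant δ₀ ∈ (0,1) and a constant C > 0, depending only on w_- and w_+, such that for all δ ∈ (0, δ₀] and all t > 0: sup_{x ∈ ℝ} |w^r_δ(x,t) − w^r(x/t)| ≤ C δ t^{−1} [ln(1 + t) + |ln δ|]. -/

import Mathlib

/-!
Along the characteristic issued from `y = x₀(x,t)` the solution equals `w_δ(y)` and
`x / t = w_δ(y) + y / t`, while `w^r` is the clamp of its argument to `[w₋, w₊]`. Since the clamp
is `1`-Lipschitz and fixes `w_δ(y)`, the error is at most `|y| / t`. Since `w^r(x / t)` lies
between `w_δ(y)` and the end state on the side of `y`, the error is also at most the distance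
from `w_δ(y)` to that end state, which decays like `(w₊ - w₋) e^{-2|y|/δ}`. The first bound wins
for `|y| ≲ δ (ln(1 + t) + |ln δ|)`, the second beyond it.
-/

open Real Set

namespace Real

theorem one_sub_tanh_le_two_mul_exp (u : ℝ) : 1 - tanh u ≤ 2 * exp (-(2 * u)) := by
  have hcosh : exp u / 2 ≤ cosh u := by
    rw [cosh_eq]
    linarith [exp_pos (-u)]
  have hsub : 1 - tanh u = exp (-u) / cosh u := by
    rw [tanh_eq_sinh_div_cosh, eq_div_iff (cosh_pos u).ne', sub_mul, one_mul,
      div_mul_cancel₀ _ (cosh_pos u).ne', cosh_sub_sinh]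
  calc 1 - tanh u = exp (-u) / cosh u := hsub
    _ ≤ exp (-u) / (exp u / 2) := by gcongr
    _ = 2 * exp (-(2 * u)) := by
      rw [div_div_eq_mul_div, div_eq_iff (exp_pos u).ne', mul_assoc, ← exp_add]
      ring_nf

end Real

section Clamp

variable {lo hi : ℝ}

theorem eq_max_min_of_eq_on_pieces {f : ℝ → ℝ} (hlh : lo ≤ hi) (h_lo : ∀ ξ ≤ lo, f ξ = lo)
    (h_mid : ∀ ξ, lo ≤ ξ → ξ ≤ hi → f ξ = ξ) (h_hi : ∀ ξ, hi ≤ ξ → f ξ = hi) (ξ : ℝ) :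
    f ξ = max lo (min hi ξ) := by
  rcases le_total ξ lo with h | h
  · rw [h_lo ξ h, max_eq_left (min_le_of_right_le h)]
  rcases le_total ξ hi with h' | h'
  · rw [h_mid ξ h h', min_eq_right h', max_eq_right h]
  · rw [h_hi ξ h', min_eq_left h', max_eq_right hlh]

theorem abs_max_min_sub_max_min_le (a b : ℝ) :
    |max lo (min hi a) - max lo (min hi b)| ≤ |a - b| :=
  calc |max lo (min hi a) - max lo (min hi b)| ≤ |min hi a - min hi b| := by
        simpa only [max_comm lo] using abs_max_sub_max_le_abs (min hi a) (min hi b) lo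
    _ ≤ |a - b| := by simpa using abs_min_sub_min_le_max hi a hi b

variable {v : ℝ} (hv : v ∈ Icc lo hi)
include hv

theorem abs_sub_max_min_add_le_abs (h : ℝ) : |v - max lo (min hi (v + h))| ≤ |h| := by
  have hfix : max lo (min hi v) = v := by rw [min_eq_right hv.2, max_eq_right hv.1]
  simpa [hfix] using abs_max_min_sub_max_min_le (lo := lo) (hi := hi) v (v + h)

theorem abs_sub_max_min_add_le_of_nonneg {h : ℝ} (hh : 0 ≤ h) :
    |v - max lo (min hi (v + h))| ≤ hi - v := by
  have h₁ : v ≤ max lo (min hi (v + h)) := le_max_of_le_right (le_min hv.2 (by linarith))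
  have h₂ : max lo (min hi (v + h)) ≤ hi := max_le (hv.1.trans hv.2) (min_le_left _ _)
  rw [abs_sub_comm, abs_of_nonneg (sub_nonneg.2 h₁)]
  linarith

theorem abs_sub_max_min_add_le_of_nonpos {h : ℝ} (hh : h ≤ 0) :
    |v - max lo (min hi (v + h))| ≤ v - lo := by
  have h₁ : max lo (min hi (v + h)) ≤ v := max_le hv.1 (min_le_of_right_le (by linarith))
  rw [abs_of_nonneg (sub_nonneg.2 h₁)]
  linarith [le_max_left lo (min hi (v + h))]

end Clamp

/-- The smoothed Riemann data `w_δ` joining `lo` at `-∞` to `hi` at `+∞`. -/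
noncomputable def tanhProfile (lo hi δ x : ℝ) : ℝ := (hi + lo) / 2 + (hi - lo) / 2 * tanh (x / δ)

section TanhProfile

variable {lo hi : ℝ} (hlh : lo ≤ hi) (δ x : ℝ)
include hlh

theorem tanhProfile_mem_Icc : tanhProfile lo hi δ x ∈ Icc lo hi := by
  have h₁ := neg_one_lt_tanh (x / δ)
  have h₂ := tanh_lt_one (x / δ)
  constructor <;> unfold tanhProfile <;> nlinarith

theorem sub_tanhProfile_le : hi - tanhProfile lo hi δ x ≤ (hi - lo) * exp (-(2 * (x / δ))) := by
  have := mul_le_mul_of_nonneg_left (one_sub_tanh_le_two_mul_exp (x / δ))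
    (div_nonneg (sub_nonneg.2 hlh) zero_le_two)
  unfold tanhProfile
  linarith

theorem tanhProfile_sub_le : tanhProfile lo hi δ x - lo ≤ (hi - lo) * exp (2 * (x / δ)) := by
  have := mul_le_mul_of_nonneg_left (one_sub_tanh_le_two_mul_exp (-(x / δ)))
    (div_nonneg (sub_nonneg.2 hlh) zero_le_two)
  rw [tanh_neg, mul_neg, neg_neg] at this
  unfold tanhProfile
  linarith

/-- `max lo (min hi (x / t))` is the rarefaction fan and `x / t = w_δ(y) + y / t` along the
characteristic issued from `y`. -/
theorem abs_tanhProfile_sub_max_min_le {t : ℝ} (ht : 0 < t) (y : ℝ) :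
    |tanhProfile lo hi δ y - max lo (min hi (tanhProfile lo hi δ y + y / t))| ≤
      (hi - lo) * exp (-(2 * |y| / δ)) := by
  have hv := tanhProfile_mem_Icc hlh δ y
  rcases le_total 0 y with hy | hy
  · refine (abs_sub_max_min_add_le_of_nonneg hv (div_nonneg hy ht.le)).trans ?_
    rw [abs_of_nonneg hy, mul_div_assoc]
    exact sub_tanhProfile_le hlh δ y
  · refine (abs_sub_max_min_add_le_of_nonpos hv (div_nonpos_of_nonpos_of_nonneg hy ht.le)).trans ?_
    rw [abs_of_nonpos hy, show -(2 * -y / δ) = 2 * (y / δ) by ring]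
    exact tanhProfile_sub_le hlh δ y

end TanhProfile

/-- Balancing the bounds `s / t` and `K e^{-2s/δ}`: the crossover is at `s ≈ δ (ln(1 + t) + |ln δ|)`,
where `e^{-(ln(1 + t) + |ln δ|)} = δ / (1 + t)`. -/
theorem le_mul_log_of_le_div_of_le_mul_exp {e s t δ K C : ℝ} (ht : 0 < t) (hδ : 0 < δ)
    (hδ₀ : δ ≤ 1 / 2) (hK : 0 ≤ K) (hC : 1 ≤ C) (hKC : K ≤ C * log 2)
    (h_near : e ≤ s / t) (h_far : e ≤ K * exp (-(2 * s / δ))) :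
    e ≤ C * δ * t⁻¹ * (log (1 + t) + |log δ|) := by
  set L := log (1 + t) + |log δ| with hL
  have habs : |log δ| = -log δ := abs_of_neg (log_neg hδ (by linarith))
  have hL₂ : log 2 ≤ L := by
    have : log δ ≤ -log 2 := by
      simpa [log_inv] using log_le_log hδ (hδ₀.trans_eq (one_div 2))
    linarith [log_nonneg (by linarith : (1 : ℝ) ≤ 1 + t)]
  have hL₀ : 0 ≤ L := (log_pos one_lt_two).le.trans hL₂
  have hexp : exp (-L) = δ / (1 + t) := by
    rw [hL, habs, show -(log (1 + t) + -log δ) = log δ - log (1 + t) by ring, exp_sub,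
      exp_log hδ, exp_log (by linarith)]
  have htarget : C * δ * t⁻¹ * L = C * L * δ / t := by ring
  rw [htarget]
  rcases le_or_gt s (C * δ * L) with hs | hs
  · exact h_near.trans (div_le_div_of_nonneg_right (by linarith) ht.le)
  have hLs : L ≤ 2 * s / δ := by
    have hCL : C * L < s / δ := by rw [lt_div_iff₀ hδ]; linarith
    have hL_le : L ≤ C * L := le_mul_of_one_le_left hL₀ hC
    have : 0 ≤ s / δ := hL₀.trans (hL_le.trans hCL.le)
    rw [mul_div_assoc]
    linarith
  calc e ≤ K * exp (-(2 * s / δ)) := h_far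
    _ ≤ K * exp (-L) := by gcongr
    _ = K * δ / (1 + t) := by rw [hexp, mul_div_assoc]
    _ ≤ K * δ / t := by gcongr; linarith
    _ ≤ C * L * δ / t := by
      gcongr
      calc K ≤ C * log 2 := hKC
        _ ≤ C * L := by gcongr

/-- convergence of the smoothed Burgers solution to the inviscid
rarefaction wave: there are δ₀ ∈ (0,1) and C > 0 (depending only on w₋, w₊)
such that for δ ∈ (0,δ₀] and t > 0,
sup_x |w^r_δ(x,t) − w^r(x/t)| ≤ C δ t⁻¹ [ln(1+t) + |ln δ|]. -/
theorem burgers_convergence_to_rarefaction (wm wp : ℝ) (hw : wm < wp) :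
    ∃ δ₀ ∈ Set.Ioo (0 : ℝ) 1, ∃ C > (0 : ℝ), ∀ δ ∈ Set.Ioc (0 : ℝ) δ₀,
      ∀ wδ : ℝ → ℝ,
        (∀ x, wδ x = (wp + wm) / 2 + (wp - wm) / 2 * Real.tanh (x / δ)) →
      ∀ x₀ : ℝ → ℝ → ℝ,
        (∀ x t : ℝ, 0 ≤ t → x₀ x t + wδ (x₀ x t) * t = x) →
      ∀ w : ℝ → ℝ → ℝ,
        (∀ x t : ℝ, 0 ≤ t → w x t = wδ (x₀ x t)) →
      ∀ wr : ℝ → ℝ,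
        (∀ ξ : ℝ, ξ ≤ wm → wr ξ = wm) →
        (∀ ξ : ℝ, wm ≤ ξ → ξ ≤ wp → wr ξ = ξ) →
        (∀ ξ : ℝ, wp ≤ ξ → wr ξ = wp) →
      ∀ t : ℝ, 0 < t → ∀ x : ℝ,
        |w x t - wr (x / t)| ≤ C * δ * t⁻¹ * (Real.log (1 + t) + |Real.log δ|) := by
  have hlog₂ : 0 < log 2 := log_pos one_lt_two
  refine ⟨1 / 2, ⟨by norm_num, by norm_num⟩, max 1 ((wp - wm) / log 2),
    lt_max_of_lt_left one_pos, ?_⟩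
  rintro δ ⟨hδ, hδ₀⟩ wδ hwδ x₀ hx₀ w hw_char wr hwr_lo hwr_mid hwr_hi t ht x
  have hwδ_eq : wδ = tanhProfile wm wp δ := funext hwδ
  have hwr : ∀ ξ, wr ξ = max wm (min wp ξ) :=
    eq_max_min_of_eq_on_pieces hw.le hwr_lo hwr_mid hwr_hi
  set y := x₀ x t
  have hx : x / t = wδ y + y / t := by
    rw [← hx₀ x t ht.le]
    field_simp
    ring
  rw [hw_char x t ht.le, hx, hwr, hwδ_eq]
  refine le_mul_log_of_le_div_of_le_mul_exp (s := |y|) ht hδ hδ₀ (sub_nonneg.2 hw.le)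
    (le_max_left _ _) ?_ ?_ (abs_tanhProfile_sub_max_min_le hw.le δ ht y)
  · rw [← div_le_iff₀ hlog₂]
    exact le_max_right _ _
  · simpa [abs_div, abs_of_pos ht] using
      abs_sub_max_min_add_le_abs (tanhProfile_mem_Icc hw.le δ y) (y / t)
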